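/- arXiv:1202.6636 — 6 statements merged into one kernel-verified Lean document; each statement's English description precedes it below -/
import Mathlib

section
/- For each m ≥ 0, the value of any point defined in f_{1̲} ∘ (f_{0̲} ∘ f_{1̲})^m (∗) is the same in f_{1̲} ∘ (f_{0̲} ∘ f_{1̲})^{m+k} (∗) for every k ≥ 0. Here ∗ denotes the constant sequence on the one-letter alphabet {∗}, a position is 'defined' if its value is not ∗, and the alphabet of the composed arrays is {0, 1, ∗}. -/
/-- Superposition: `(A ∩ B)(2n) = B n`, `(A ∩ B)(2n-1) = A n`. -/
def cap {α : Type*} (A B : ℤ → α) : ℤ → α :=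
  fun v => if v % 2 = 0 then B (v / 2) else A ((v + 1) / 2)

/-- `Y m = f_{1̲} ∘ (f_{0̲} ∘ f_{1̲})^m (∗̲)`, over alphabet `{0, 1, ∗}` modelled as
`Option (Fin 2)` with `∗ = none`. -/
def Y (m : ℕ) : ℤ → Option (Fin 2) :=
  cap ((fun Z : ℤ → Option (Fin 2) => cap (cap Z (fun _ => some 1)) (fun _ => some 0))^[m]
    (fun _ => none)) (fun _ => some 1)

/-! The superposition is monotone for the order "`W` agrees with `Z` wherever `Z` is defined", and
`∗̲` is its least element. Hence the iterates of `f_{0̲} ∘ f_{1̲}` on `∗̲` form an increasing chain,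
and so do their images under `f_{1̲}`. -/

section Extends

variable {α : Type*}

def Extends (W Z : ℤ → Option α) : Prop :=
  ∀ v, Z v ≠ none → W v = Z v

theorem Extends.refl (Z : ℤ → Option α) : Extends Z Z :=
  fun _ _ => rfl

theorem extends_none (Z : ℤ → Option α) : Extends Z (fun _ => none) :=
  fun _ h => absurd rfl h

theorem Extends.cap {A A' B B' : ℤ → Option α} (hA : Extends A' A) (hB : Extends B' B) :
    Extends (cap A' B') (cap A B) := by
  intro v hv
  unfold _root_.cap at hv ⊢
  split_ifs at hv ⊢
  · exact hB _ hv
  · exact hA _ hv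

theorem Extends.iterate {F : (ℤ → Option α) → ℤ → Option α}
    (hF : ∀ {Z W}, Extends W Z → Extends (F W) (F Z)) {Z W : ℤ → Option α}
    (h : Extends W Z) (n : ℕ) : Extends (F^[n] W) (F^[n] Z) := by
  induction n with
  | zero => exact h
  | succ n ih => simpa only [Function.iterate_succ_apply'] using hF ih

end Extends

/-- Any point defined (value `≠ ∗`) in `f_{1̲} ∘ (f_{0̲} ∘ f_{1̲})^m (∗)` is defined with the
same value in `f_{1̲} ∘ (f_{0̲} ∘ f_{1̲})^{m+k} (∗)`. -/
theorem stmt_5 (m k : ℕ) (v : ℤ) (h : Y m v ≠ none) : Y (m + k) v = Y m v := by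
  set F : (ℤ → Option (Fin 2)) → ℤ → Option (Fin 2) :=
    fun Z => cap (cap Z (fun _ => some 1)) (fun _ => some 0)
  have hF : ∀ {Z W}, Extends W Z → Extends (F W) (F Z) :=
    fun h => (h.cap (Extends.refl _)).cap (Extends.refl _)
  have hiter : Extends (F^[m + k] fun _ => none) (F^[m] fun _ => none) := by
    rw [Function.iterate_add_apply]
    exact Extends.iterate hF (extends_none _) m
  exact hiter.cap (Extends.refl _) v h
end

section
/- The limit (0̲ ∩ 1̲)^∞ = lim_{m→∞} (0̲ ∩ 1̲)^m exists, where (0̲ ∩ 1̲)^m denotes the 2m-fold alternating superposition 0̲ ∩ 1̲ ∩ 0̲ ∩ 1̲ ∩ ⋯ ∩ 0̲ ∩ 1̲ (evaluated left to right): for every position v ∈ ℤ there exists M and a value c ∈ {0,1} such that (0̲ ∩ 1̲)^m(v) = c for all m ≥ M. -/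
/-- `W m = (0̲ ∩ 1̲)^m`, the `2m`-fold alternating left-to-right superposition, for `m ≥ 1`. -/
def W : ℕ → ℤ → Fin 2
  | 0 => fun _ => 0
  | 1 => cap (fun _ => 0) (fun _ => 1)
  | (m + 2) => cap (cap (W (m + 1)) (fun _ => 0)) (fun _ => 1)

open Filter

theorem Filter.EventuallyConst.of_comp_add_nat {α : Type*} {f : ℕ → α} (k : ℕ)
    (h : EventuallyConst (fun m => f (m + k)) atTop) : EventuallyConst f atTop := by
  rwa [EventuallyConst, ← map_add_atTop_eq_nat k, map_map]

theorem cap_two_mul {α : Type*} (A B : ℤ → α) (k : ℤ) : cap A B (2 * k) = B k := by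
  simp [cap]

theorem cap_two_mul_sub_one {α : Type*} (A B : ℤ → α) (k : ℤ) : cap A B (2 * k - 1) = A k := by
  have h1 : (2 * k - 1) % 2 ≠ 0 := by omega
  have h2 : (2 * k - 1 + 1) / 2 = k := by omega
  simp only [cap, if_neg h1, h2]

theorem W_add_two_two_mul (m : ℕ) (k : ℤ) : W (m + 2) (2 * k) = 1 :=
  cap_two_mul _ _ k

theorem W_add_two_four_mul_sub_one (m : ℕ) (k : ℤ) : W (m + 2) (4 * k - 1) = 0 := by
  rw [show 4 * k - 1 = 2 * (2 * k) - 1 by ring]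
  exact (cap_two_mul_sub_one _ _ _).trans (cap_two_mul _ _ _)

theorem W_add_two_four_mul_add_one (m : ℕ) (k : ℤ) :
    W (m + 2) (4 * k + 1) = W (m + 1) (k + 1) := by
  rw [show 4 * k + 1 = 2 * (2 * (k + 1) - 1) - 1 by ring]
  exact (cap_two_mul_sub_one _ _ _).trans (cap_two_mul_sub_one _ _ _)

theorem W_add_one_one (m : ℕ) : W (m + 1) 1 = 0 := by
  induction m with
  | zero => rfl
  | succ m ih => simpa using (W_add_two_four_mul_add_one m 0).trans ih

theorem eventuallyConst_W (v : ℤ) : EventuallyConst (fun m => W m v) atTop := by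
  refine .of_comp_add_nat 2 ?_
  obtain ⟨k, rfl | rfl | rfl⟩ : ∃ k, v = 2 * k ∨ v = 4 * k - 1 ∨ v = 4 * k + 1 :=
    ⟨if v % 2 = 0 then v / 2 else (v + 1) / 4, by split_ifs <;> omega⟩
  · simpa only [W_add_two_two_mul] using EventuallyConst.const 1
  · simpa only [W_add_two_four_mul_sub_one] using EventuallyConst.const 0
  · simp only [W_add_two_four_mul_add_one]
    by_cases hk : k = 0
    · simp only [hk, zero_add, W_add_one_one, EventuallyConst.const]
    · exact (eventuallyConst_W (k + 1)).comp_tendsto (tendsto_add_atTop_nat 1)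
termination_by v.natAbs
decreasing_by omega

/-- The limit `(0̲ ∩ 1̲)^∞` exists: every position is eventually constant. -/
theorem stmt_6 :
    ∀ v : ℤ, ∃ M : ℕ, 1 ≤ M ∧ ∃ c : Fin 2, ∀ m : ℕ, M ≤ m → W m v = c := by
  intro v
  obtain ⟨M, hM⟩ := eventuallyConst_atTop.1 (eventuallyConst_W v)
  exact ⟨M + 1, M.succ_pos, W M v, fun m hm => hM m (by omega)⟩
end

section
/- Every position of the limit T = (0̲ ∩ 1̲)^∞ except position 1 lies in a periodic part: for all n ∈ ℤ with n ≠ 1 there exists p ≥ 2 with T(n + kp) = T(n) for all k ∈ ℤ. More specifically, for each n ≠ 1 we have n ∈ S_j = {2^j s - 2^{j-1} + 1 : s ∈ ℤ} for a unique j ≥ 1, and T is constant on S_j (value 1 if j is odd, 0 if j is even), so n lies in a 2^j-periodic part. -/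
/-- `S j = {2^j·s - 2^(j-1) + 1 : s ∈ ℤ}`. -/
def S (j : ℕ) : Set ℤ := {x | ∃ s : ℤ, x = 2 ^ j * s - 2 ^ (j - 1) + 1}

lemma W_even : ∀ m : ℕ, 1 ≤ m → ∀ v : ℤ, v % 2 = 0 → W m v = 1 := by
  intro m hm v hv
  match m with
  | 1 => simp [W, cap, hv]
  | (m+2) => simp [W, cap, hv]

lemma W_mod4 (m : ℕ) (v : ℤ) (hv : v % 4 = 3) : W (m+2) v = 0 := by
  have h1 : v % 2 = 1 := by omega
  have h2 : (v + 1) / 2 % 2 = 0 := by omega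
  simp [W, cap, h1, h2]

lemma W_step (m : ℕ) (w : ℤ) : W (m+2) (4*w - 3) = W (m+1) w := by
  have h1 : (4*w - 3) % 2 = 1 := by omega
  have h2 : (4*w - 3 + 1) / 2 % 2 = 1 := by omega
  have h3 : ((4*w - 3 + 1) / 2 + 1) / 2 = w := by omega
  simp [W, cap, h1, h2, h3]

lemma key : ∀ j : ℕ, 1 ≤ j → ∀ v ∈ S j, ∀ m : ℕ, j ≤ m →
    W m v = if j % 2 = 1 then 1 else 0 := by
  intro j
  induction j using Nat.strong_induction_on with
  | _ j ih =>
    match j with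
    | 0 => intro h; exact absurd h (by norm_num)
    | 1 =>
      intro _ v hv m hm
      obtain ⟨s, hs⟩ := hv
      norm_num at hs
      have hv2 : v % 2 = 0 := by omega
      rw [W_even m hm v hv2]
      norm_num
    | 2 =>
      intro _ v hv m hm
      obtain ⟨s, hs⟩ := hv
      norm_num at hs
      have hv4 : v % 4 = 3 := by omega
      obtain ⟨m', rfl⟩ : ∃ m', m = m' + 2 := ⟨m - 2, by omega⟩
      rw [W_mod4 m' v hv4]
      norm_num
    | (k+3) =>
      intro _ v hv m hm
      obtain ⟨s, hs⟩ := hv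
      have hs' : v = 2^(k+3)*s - 2^(k+2) + 1 := hs
      set w : ℤ := 2^(k+1)*s - 2^k + 1 with hw
      have hv4 : v = 4*w - 3 := by rw [hs', hw]; ring
      obtain ⟨m', rfl⟩ : ∃ m', m = m' + 2 := ⟨m - 2, by omega⟩
      rw [hv4, W_step m' w]
      have hmem : w ∈ S (k+1) := ⟨s, rfl⟩
      have := ih (k+1) (by omega) (by omega) w hmem (m'+1) (by omega)
      rw [this]
      have hmod : (k+3) % 2 = (k+1) % 2 := by omega
      rw [hmod]

lemma exists_pow (d : ℤ) (hd : d ≠ 0) : ∃ a : ℕ, ∃ s : ℤ, d = 2^a * (2*s - 1) := by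
  obtain ⟨n, hn⟩ : ∃ n, d.natAbs = n := ⟨_, rfl⟩
  induction n using Nat.strong_induction_on generalizing d with
  | _ n ih =>
    rcases Int.even_or_odd d with ⟨e, he⟩ | ⟨e, he⟩
    · have he' : e ≠ 0 := by omega
      obtain ⟨a, s, hs⟩ := ih e.natAbs (by omega) e he' rfl
      exact ⟨a+1, s, by rw [he, hs]; ring⟩
    · exact ⟨0, e+1, by rw [pow_zero, one_mul]; omega⟩

lemma pow_unique : ∀ a b : ℕ, ∀ s t : ℤ, 2^a * (2*s-1) = 2^b * (2*t-1) → a = b := by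
  intro a b s t h
  by_contra hne
  wlog hab : a < b generalizing a b s t
  · exact this b a t s h.symm (Ne.symm hne) (by omega)
  · have hb : (2:ℤ)^b = 2^a * 2^(b-a) := by rw [← pow_add]; congr 1; omega
    rw [hb, mul_assoc] at h
    have h' := mul_left_cancel₀ (a := (2:ℤ)^a) (by positivity) h
    obtain ⟨c, hc⟩ : (2:ℤ) ∣ 2^(b-a) := dvd_pow_self 2 (by omega)
    rw [hc, mul_assoc] at h'
    omega

/-- Every position `n ≠ 1` of the limit `T = (0̲ ∩ 1̲)^∞` lies in a periodic part; in fact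
`n` lies in a unique `S j` (`j ≥ 1`), `T` is constant on `S j` (value `1` if `j` odd, `0` if
`j` even), and `n` lies in a `2^j`-periodic part of `T`. -/
theorem stmt_10 (T : ℤ → Fin 2)
    (hT : ∀ v : ℤ, ∃ M : ℕ, ∀ m : ℕ, M ≤ m → W m v = T v) :
    ∀ n : ℤ, n ≠ 1 →
      (∃ p : ℤ, 2 ≤ p ∧ ∀ k : ℤ, T (n + k * p) = T n) ∧
      (∃! j : ℕ, 1 ≤ j ∧ n ∈ S j) ∧
      (∀ j : ℕ, 1 ≤ j → n ∈ S j →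
        (∀ x ∈ S j, T x = if j % 2 = 1 then 1 else 0) ∧
        ∀ k : ℤ, T (n + k * 2 ^ j) = T n) := by
  have Tconst : ∀ j, 1 ≤ j → ∀ x ∈ S j, T x = if j % 2 = 1 then 1 else 0 := by
    intro j hj x hx
    obtain ⟨M, hM⟩ := hT x
    rw [← hM (max M j) (le_max_left _ _)]
    exact key j hj x hx _ (le_max_right _ _)
  have Sshift : ∀ j : ℕ, ∀ n ∈ S j, ∀ k : ℤ, n + k * 2^j ∈ S j := by
    rintro j n ⟨s, hs⟩ k
    exact ⟨s + k, by rw [hs]; ring⟩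
  intro n hn
  have hd : n - 1 ≠ 0 := by omega
  obtain ⟨a, s, hs⟩ := exists_pow (n-1) hd
  have hmem : n ∈ S (a+1) := ⟨s, by simp only [Nat.add_sub_cancel]; linear_combination hs⟩
  refine ⟨⟨2^(a+1), ?_, ?_⟩, ⟨a+1, ⟨by omega, hmem⟩, ?_⟩, ?_⟩
  · calc (2:ℤ) = 2^1 := by norm_num
    _ ≤ 2^(a+1) := pow_le_pow_right₀ (by norm_num) (by omega)
  · intro k
    rw [Tconst (a+1) (by omega) _ (Sshift _ n hmem k), Tconst (a+1) (by omega) n hmem]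
  · rintro j' ⟨hj', t, ht⟩
    obtain ⟨i, rfl⟩ : ∃ i, j' = i + 1 := ⟨j' - 1, by omega⟩
    simp only [Nat.add_sub_cancel] at ht
    have : n - 1 = 2^i * (2*t - 1) := by linear_combination ht
    have := pow_unique i a t s (by rw [← this, hs])
    omega
  · intro j hj hmemj
    refine ⟨fun x hx => Tconst j hj x hx, fun k => ?_⟩
    rw [Tconst j hj _ (Sshift j n hmemj k), Tconst j hj n hmemj]
end

section
/- The sequence T = (0̲ ∩ 1̲)^∞ is not periodic: there is no p ≥ 1 such that T(t + p) = T(t) for all t ∈ ℤ. -/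
/-- `T = (0̲ ∩ 1̲)^∞`, characterized by `T 1 = 0` and
`T (2^j·s - 2^(j-1) + 1) = 1` if `j` odd, `0` if `j` even (`j ≥ 1`), is not periodic. -/
theorem stmt_11 (T : ℤ → Fin 2) (h1 : T 1 = 0)
    (h2 : ∀ j : ℕ, 1 ≤ j → ∀ s : ℤ,
      T (2 ^ j * s - 2 ^ (j - 1) + 1) = if j % 2 = 1 then 1 else 0) :
    ¬ ∃ p : ℤ, 1 ≤ p ∧ ∀ t : ℤ, T (t + p) = T t := by
  rintro ⟨p, hp, hper⟩
  set n := p.toNat with hn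
  have hn1 : 1 ≤ n := by omega
  have hpn : (n : ℤ) = p := Int.toNat_of_nonneg (by omega)
  set k := n.factorization 2 with hk
  set m := n / 2 ^ k with hm
  have hodd : ¬ 2 ∣ m := Nat.not_dvd_ordCompl (by norm_num) (by omega)
  have hnm : 2 ^ k * m = n := Nat.ordProj_mul_ordCompl_eq_self n 2
  obtain ⟨u, hu⟩ := Nat.odd_iff.mpr (Nat.two_dvd_ne_zero.mp hodd)
  -- T at t = 2^(k+1)+1 : use j = k+2, s = 1
  have ht1 : T ((2:ℤ)^(k+1) + 1) = if (k+2) % 2 = 1 then 1 else 0 := by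
    have h := h2 (k+2) (by omega) 1
    have he : (2:ℤ) ^ (k+2) * 1 - 2 ^ (k+2-1) + 1 = 2^(k+1) + 1 := by
      have : k + 2 - 1 = k + 1 := by omega
      rw [this]; ring
    rwa [he] at h
  -- T at t + p : use j = k+1, s = u+2
  have ht2 : T ((2:ℤ)^(k+1) + 1 + p) = if (k+1) % 2 = 1 then 1 else 0 := by
    have h := h2 (k+1) (by omega) ((u:ℤ)+2)
    have he : (2:ℤ) ^ (k+1) * ((u:ℤ)+2) - 2 ^ (k+1-1) + 1 = 2^(k+1) + 1 + p := by
      have : k + 1 - 1 = k := by omega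
      rw [this, ← hpn, ← hnm, hu]
      push_cast
      ring
    rwa [he] at h
  have := hper ((2:ℤ)^(k+1) + 1)
  rw [ht1, ht2] at this
  rcases Nat.even_or_odd k with hk2 | hk2 <;> [rw [Nat.even_iff] at hk2; rw [Nat.odd_iff] at hk2] <;>
    [ (have ha : (k+2) % 2 = 0 := by omega;
       have hb : (k+1) % 2 = 1 := by omega);
      (have ha : (k+2) % 2 = 1 := by omega;
       have hb : (k+1) % 2 = 0 := by omega)] <;>
    simp [ha, hb] at this
end

section
/- Let T = (0̲ ∩ 1̲)^∞. Then T is not periodic, and every n ∈ ℤ with n ≠ 1 lies in Per_{2^j}(T) for its unique j. -/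
/-- Any nonzero integer is `2^a * m` with `m` odd. -/
lemma int_two_pow_mul_odd {d : ℤ} (hd : d ≠ 0) :
    ∃ (a : ℕ) (m : ℤ), Odd m ∧ d = 2 ^ a * m := by
  have hna : d.natAbs ≠ 0 := Int.natAbs_ne_zero.mpr hd
  obtain ⟨a, m, hm, hdm⟩ := Nat.exists_eq_two_pow_mul_odd hna
  rcases Int.natAbs_eq d with h | h
  · exact ⟨a, m, by exact_mod_cast Int.odd_coe_nat m |>.mpr hm, by
      rw [h, hdm]; push_cast; ring⟩
  · refine ⟨a, -m, ?_, ?_⟩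
    · exact (Int.odd_coe_nat m |>.mpr hm).neg
    · rw [h, hdm]; push_cast; ring

/-- `T = (0̲ ∩ 1̲)^∞` is a Toeplitz sequence: it is not periodic, and every position
`n ≠ 1` lies in `Per_{2^j}(T)` where `j ≥ 1` is determined by `n ∈ S j`. -/
theorem stmt_12 (T : ℤ → Fin 2) (h1 : T 1 = 0)
    (h2 : ∀ j : ℕ, 1 ≤ j → ∀ s : ℤ,
      T (2 ^ j * s - 2 ^ (j - 1) + 1) = if j % 2 = 1 then 1 else 0) :
    (¬ ∃ p : ℤ, 1 ≤ p ∧ ∀ t : ℤ, T (t + p) = T t) ∧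
    (∀ n : ℤ, n ≠ 1 → ∃ j : ℕ, 1 ≤ j ∧ n ∈ S j ∧
      ∀ k : ℤ, T (n + k * 2 ^ j) = T n) := by
  constructor
  · rintro ⟨p, hp, hper⟩
    obtain ⟨a, m, hm, rfl⟩ := int_two_pow_mul_odd (show (p:ℤ) ≠ 0 by omega)
    obtain ⟨r, hr⟩ := hm
    -- t = 2^(a+1) + 1
    have ht : T ((2:ℤ) ^ (a + 1) + 1) = if (a + 2) % 2 = 1 then 1 else 0 := by
      have := h2 (a + 2) (by omega) 1
      have he : (2:ℤ) ^ (a + 2) * 1 - 2 ^ (a + 2 - 1) + 1 = 2 ^ (a + 1) + 1 := by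
        simp [show a + 2 - 1 = a + 1 from rfl]; ring
      rwa [he] at this
    have htp : T ((2:ℤ) ^ (a + 1) + 1 + 2 ^ a * m)
        = if (a + 1) % 2 = 1 then 1 else 0 := by
      have := h2 (a + 1) (by omega) (r + 2)
      have he : (2:ℤ) ^ (a + 1) * (r + 2) - 2 ^ (a + 1 - 1) + 1
          = 2 ^ (a + 1) + 1 + 2 ^ a * m := by
        simp only [show a + 1 - 1 = a from rfl, hr]
        ring
      rwa [he] at this
    have := hper ((2:ℤ) ^ (a + 1) + 1)
    rw [htp, ht] at this
    rcases Nat.even_or_odd a with ⟨b, rfl⟩ | ⟨b, rfl⟩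
    · have ha1 : (b + b + 2) % 2 = 0 := by omega
      have ha2 : (b + b + 1) % 2 = 1 := by omega
      simp [ha1, ha2] at this
    · have ha1 : (2 * b + 1 + 2) % 2 = 1 := by omega
      have ha2 : (2 * b + 1 + 1) % 2 = 0 := by omega
      simp [ha1, ha2] at this
  · intro n hn
    obtain ⟨a, m, hm, hd⟩ := int_two_pow_mul_odd (show n - 1 ≠ 0 by omega)
    obtain ⟨r, hr⟩ := hm
    refine ⟨a + 1, by omega, ⟨r + 1, ?_⟩, ?_⟩
    · have : n = 2 ^ a * m + 1 := by omega
      rw [this, hr, show a + 1 - 1 = a from rfl]; push_cast; ring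
    · intro k
      have hn' : n = 2 ^ (a + 1) * (r + 1) - 2 ^ (a + 1 - 1) + 1 := by
        have : n = 2 ^ a * m + 1 := by omega
        rw [this, hr, show a + 1 - 1 = a from rfl]; push_cast; ring
      have h₁ := h2 (a + 1) (by omega) (r + 1)
      have h₂ := h2 (a + 1) (by omega) (r + 1 + k)
      have he : (2:ℤ) ^ (a + 1) * (r + 1 + k) - 2 ^ (a + 1 - 1) + 1
          = n + k * 2 ^ (a + 1) := by rw [hn']; ring
      rw [he] at h₂
      rw [h₂, ← hn'] at *
      rw [h₁]
end

section
/- For every m ≥ 1, the finite superposition (0̲ ∩ 1̲)^m is a periodic sequence with period 2^{2m-1}: ((0̲ ∩ 1̲)^m)(t + 2^{2m-1}) = ((0̲ ∩ 1̲)^m)(t) for all t ∈ ℤ. -/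
/-! Superposing two `p`-periodic sequences gives a `2p`-periodic one, since `cap A B` reads
its arguments at `⌊v/2⌋` or `⌊(v+1)/2⌋`. Each of the two superpositions in the step from
`W (m + 1)` to `W (m + 2)` therefore doubles the period, and `W 1` has period `2`. -/

open Function

theorem Function.Periodic.cap {α : Type*} {A B : ℤ → α} {p : ℤ}
    (hA : Periodic A p) (hB : Periodic B p) : Periodic (cap A B) (2 * p) := by
  intro v
  have hmod : (v + 2 * p) % 2 = v % 2 := by omega
  simp only [_root_.cap, hmod]
  split
  · rw [show (v + 2 * p) / 2 = v / 2 + p by omega, hB]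
  · rw [show (v + 2 * p + 1) / 2 = (v + 1) / 2 + p by omega, hA]

theorem W_succ_periodic (m : ℕ) : Periodic (W (m + 1)) (2 ^ (2 * m + 1)) := by
  induction m with
  | zero => exact Periodic.cap (p := 1) (fun _ => rfl) (fun _ => rfl)
  | succ k ih =>
    have hperiod : (2 : ℤ) ^ (2 * (k + 1) + 1) = 2 * (2 * 2 ^ (2 * k + 1)) := by ring
    rw [hperiod]
    exact (ih.cap fun _ => rfl).cap fun _ => rfl

theorem stmt_13_general (m : ℕ) (t : ℤ) :
    W m (t + 2 ^ (2 * m - 1)) = W m t := by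
  cases m with
  | zero => rfl
  | succ k =>
    rw [show 2 * (k + 1) - 1 = 2 * k + 1 by omega]
    exact W_succ_periodic k t

/-- `(0̲ ∩ 1̲)^m` is periodic with period `2^(2m-1)`. -/
theorem stmt_13 (m : ℕ) (hm : 1 ≤ m) (t : ℤ) :
    W m (t + 2 ^ (2 * m - 1)) = W m t :=
  stmt_13_general m t
end
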